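/- Let c > 0 and let f be the value-function candidate: f(x) = 2c(1-2x)log(x/(1-x)) + Āx + B̄ for x ∈ [π̂,π*] and f(x) = 1-x for x ∈ [π*,1], with the C¹-fit conditions f'(π̂)=0, f'(π*)=-1, f(π*)=1-π*. Then for all x ∈ (π̂,π*), (1/2)x²(1-x)²f''(x) + c = 0, and for all x ∈ (π*,1), (1/2)x²(1-x)²f''(x) + c = c ≥ 0. -/

import Mathlib

/-!
On `(0, π*)` the candidate is `Ψ` plus an affine function, and a direct computation gives
`Ψ''(x) = -2c / (x²(1-x)²)`: with `L = log (x/(1-x))` one has `L' = 1/(x(1-x))`, and the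
second derivative of `(1-2x) L` collapses to `-(4x(1-x) + (1-2x)²)/(x²(1-x)²) = -1/(x²(1-x)²)`.
On `(π*, 1)` the candidate is affine, so its second derivative vanishes. Since both claims are
local, only the germ of `f` at each point matters.
-/

open Real Filter Topology

lemma hasDerivAt_log_div_one_sub {x : ℝ} (hx0 : x ≠ 0) (hx1 : x ≠ 1) :
    HasDerivAt (fun y => log (y / (1 - y))) (1 / (x * (1 - x))) x := by
  have h1x : 1 - x ≠ 0 := sub_ne_zero.mpr (Ne.symm hx1)
  have hquot : HasDerivAt (fun y => y / (1 - y)) (1 / (1 - x) ^ 2) x := by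
    refine ((hasDerivAt_id' x).fun_div ((hasDerivAt_id' x).const_sub 1) h1x).congr_deriv ?_
    ring
  refine (hquot.log (div_ne_zero hx0 h1x)).congr_deriv ?_
  field_simp

lemma hasDerivAt_one_sub_two_mul_mul_log_div {x : ℝ} (hx0 : x ≠ 0) (hx1 : x ≠ 1) :
    HasDerivAt (fun y => (1 - 2 * y) * log (y / (1 - y)))
      (-2 * log (x / (1 - x)) + (1 - 2 * x) / (x * (1 - x))) x := by
  have hlin : HasDerivAt (fun y : ℝ => 1 - 2 * y) (-2) x := by
    simpa using ((hasDerivAt_id x).const_mul 2).const_sub 1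
  refine (hlin.fun_mul (hasDerivAt_log_div_one_sub hx0 hx1)).congr_deriv ?_
  ring

lemma hasDerivAt_deriv_one_sub_two_mul_mul_log_div {x : ℝ} (hx0 : x ≠ 0) (hx1 : x ≠ 1) :
    HasDerivAt (fun y => -2 * log (y / (1 - y)) + (1 - 2 * y) / (y * (1 - y)))
      (-1 / (x ^ 2 * (1 - x) ^ 2)) x := by
  have h1x : 1 - x ≠ 0 := sub_ne_zero.mpr (Ne.symm hx1)
  have hlin : HasDerivAt (fun y : ℝ => 1 - 2 * y) (-2) x := by
    simpa using ((hasDerivAt_id x).const_mul 2).const_sub 1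
  have hden : HasDerivAt (fun y : ℝ => y * (1 - y)) (1 - 2 * x) x := by
    refine ((hasDerivAt_id' x).fun_mul ((hasDerivAt_id' x).const_sub 1)).congr_deriv ?_
    ring
  refine (((hasDerivAt_log_div_one_sub hx0 hx1).const_mul (-2)).fun_add
    (hlin.fun_div hden (mul_ne_zero hx0 h1x))).congr_deriv ?_
  field_simp
  ring

lemma deriv_deriv_logit_potential_add_affine (c A B : ℝ) {x : ℝ} (hx0 : x ≠ 0) (hx1 : x ≠ 1) :
    deriv (deriv fun y => 2 * c * (1 - 2 * y) * log (y / (1 - y)) + A * y + B) x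
      = -2 * c / (x ^ 2 * (1 - x) ^ 2) := by
  have hderiv : deriv (fun y => 2 * c * (1 - 2 * y) * log (y / (1 - y)) + A * y + B)
      =ᶠ[𝓝 x] fun y => 2 * c * (-2 * log (y / (1 - y)) + (1 - 2 * y) / (y * (1 - y))) + A := by
    have hnhds : {y : ℝ | y ≠ 0 ∧ y ≠ 1} ∈ 𝓝 x :=
      (isOpen_ne.inter isOpen_ne).mem_nhds ⟨hx0, hx1⟩
    filter_upwards [hnhds] with y ⟨hy0, hy1⟩
    have h := (((hasDerivAt_one_sub_two_mul_mul_log_div hy0 hy1).const_mul (2 * c)).add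
      ((hasDerivAt_id' y).const_mul A)).add_const B
    simp only [mul_one, ← mul_assoc] at h
    exact h.deriv
  rw [hderiv.deriv_eq,
    (((hasDerivAt_deriv_one_sub_two_mul_mul_log_div hx0 hx1).const_mul (2 * c)).add_const A).deriv]
  ring

theorem stmt10_general (c πh πs A B : ℝ) (hc : 0 < c)
    (h1 : 0 < πh) (h3 : πs < 1)
    (Ψ : ℝ → ℝ) (hΨ : ∀ x, Ψ x = 2*c*(1-2*x)*Real.log (x/(1-x)))
    (f : ℝ → ℝ)
    (hf : ∀ x, f x = if x ≤ πs then Ψ x + A*x + B else 1 - x) :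
    (∀ x ∈ Set.Ioo πh πs,
      (1/2) * x^2 * (1-x)^2 * deriv (deriv f) x + c = 0) ∧
    (∀ x ∈ Set.Ioo πs 1,
      (1/2) * x^2 * (1-x)^2 * deriv (deriv f) x + c = c) ∧
    0 ≤ c := by
  refine ⟨fun x ⟨hπh, hπs⟩ => ?_, fun x ⟨hπs, _⟩ => ?_, hc.le⟩
  · have hx0 : x ≠ 0 := (h1.trans hπh).ne'
    have hx1 : x ≠ 1 := (hπs.trans h3).ne
    have hf_near : f =ᶠ[𝓝 x] fun y => 2 * c * (1 - 2 * y) * log (y / (1 - y)) + A * y + B := by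
      filter_upwards [Iio_mem_nhds hπs] with y hy
      rw [hf, if_pos (le_of_lt hy), hΨ]
    rw [hf_near.deriv.deriv_eq,
      deriv_deriv_logit_potential_add_affine c A B hx0 hx1]
    field_simp
    ring
  · have hf_near : f =ᶠ[𝓝 x] fun y => 1 - y := by
      filter_upwards [Ioi_mem_nhds hπs] with y hy
      rw [hf, if_neg (not_le.mpr hy)]
    have hderiv : deriv (fun y : ℝ => 1 - y) = fun _ => -1 := by
      funext y
      simp
    rw [hf_near.deriv.deriv_eq, hderiv, deriv_const]
    ring

theorem stmt10 (c πh πs A B : ℝ) (hc : 0 < c)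
    (h1 : 0 < πh) (h2 : πh < πs) (h3 : πs < 1)
    (Ψ : ℝ → ℝ) (hΨ : ∀ x, Ψ x = 2*c*(1-2*x)*Real.log (x/(1-x)))
    (hA : A = -deriv Ψ πh)
    (hslope : deriv Ψ πs + A = -1)
    (hB : Ψ πs + A*πs + B = 1 - πs)
    (f : ℝ → ℝ)
    (hf : ∀ x, f x = if x ≤ πs then Ψ x + A*x + B else 1 - x) :
    (∀ x ∈ Set.Ioo πh πs,
      (1/2) * x^2 * (1-x)^2 * deriv (deriv f) x + c = 0) ∧
    (∀ x ∈ Set.Ioo πs 1,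
      (1/2) * x^2 * (1-x)^2 * deriv (deriv f) x + c = c) ∧
    0 ≤ c :=
  stmt10_general c πh πs A B hc h1 h3 Ψ hΨ f hf
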